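/- Let (T, [·,·,·], α) be a regular Hom-Lie triple system over a commutative ring k with Char(k) ≠ 2, let GHE(T) = IHD(T) ⊕ T be the Lie algebra with bracket [X + a, Y + b] = [X,Y] + D_{a,b} + X^{α⁻¹}(b) − Y^{α⁻¹}(a), and let α̂ be the automorphism of GHE(T) with α̂|_T = α and α̂(D_{a,b}) = D_{α(a),α(b)}. Then the canonical inclusion ι : T → GHE(T) is an imbedding of T into (GHE(T), α̂): for all a,b,c ∈ T, ι ∘ α = α̂ ∘ ι and ι([a,b,c]) = α̂([[ι(a), ι(b)], ι(c)]), where the brackets on the right are those of GHE(T). -/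
import Mathlib


/-- The isotope commutator `[X,Y] = X ∘ α⁻¹ ∘ Y − Y ∘ α⁻¹ ∘ X` on `End(T)`. -/
def isoBr {k T : Type*} [CommRing k] [AddCommGroup T] [Module k T]
    (α : T ≃ₗ[k] T) (X Y : Module.End k T) : Module.End k T :=
  X ∘ₗ (α.symm : T →ₗ[k] T) ∘ₗ Y - Y ∘ₗ (α.symm : T →ₗ[k] T) ∘ₗ X

/-- The bracket of `GHE(T) = IHD(T) ⊕ T` (written on `End(T) × T`):
`[X + a, Y + b] = [X,Y] + D_{a,b} + X^{α⁻¹}(b) − Y^{α⁻¹}(a)`. -/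
def gbr {k T : Type*} [CommRing k] [AddCommGroup T] [Module k T]
    (t : T →ₗ[k] T →ₗ[k] T →ₗ[k] T) (α : T ≃ₗ[k] T)
    (u v : Module.End k T × T) : Module.End k T × T :=
  (isoBr α u.1 v.1 + t u.2 v.2, α.symm (u.1 v.2) - α.symm (v.1 u.2))

/-- The canonical inclusion `ι : T → GHE(T)`. -/
def incl {k T : Type*} [CommRing k] [AddCommGroup T] [Module k T] (a : T) :
    Module.End k T × T := ((0 : Module.End k T), a)

/-- Let `(T, [·,·,·], α)` be a regular Hom-Lie triple system over a
commutative ring `k` with Char(k) ≠ 2, `GHE(T)` the Lie algebra of Statement 8, and `α̂`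
the automorphism of `GHE(T)` with `α̂|_T = α` and `α̂(D_{a,b}) = D_{α a, α b}`.  Then the
canonical inclusion `ι : T → GHE(T)` is an imbedding: `ι ∘ α = α̂ ∘ ι` and
`ι [a,b,c] = α̂ [[ι a, ι b], ι c]`. -/
theorem stmt10 {k T : Type*} [CommRing k] [Invertible (2 : k)]
    [AddCommGroup T] [Module k T]
    (t : T →ₗ[k] T →ₗ[k] T →ₗ[k] T) (α : T ≃ₗ[k] T)
    (h1 : ∀ a b : T, t a a b = 0)
    (h2 : ∀ a b c : T, t a b c + t b c a + t c a b = 0)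
    (h3 : ∀ a b c d e : T, t (α a) (α b) (t c d e) =
      t (t a b c) (α d) (α e) + t (α c) (t a b d) (α e) + t (α c) (α d) (t a b e))
    (h4 : ∀ a b c : T, α (t a b c) = t (α a) (α b) (α c))
    -- `F` is the automorphism `α̂` of `GHE(T)`:
    (F : (Module.End k T × T) ≃ₗ[k] (Module.End k T × T))
    (hF0 : ∀ u v : Module.End k T × T, F (gbr t α u v) = gbr t α (F u) (F v))
    (hF1 : ∀ a : T, F ((0 : Module.End k T), a) = ((0 : Module.End k T), α a))
    (hF2 : ∀ a b : T, F ((t a b : Module.End k T), (0 : T))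
      = ((t (α a) (α b) : Module.End k T), (0 : T))) :
    (∀ a : T, incl (α a) = F (incl (k := k) a)) ∧
    (∀ a b c : T,
      incl (t a b c) = F (gbr t α (gbr t α (incl a) (incl b)) (incl c))) := by
  constructor
  · intro a
    exact (hF1 a).symm
  · intro a b c
    have e1 : gbr t α (incl a) (incl b) = ((t a b : Module.End k T), (0 : T)) := by
      simp [gbr, incl, isoBr]
    have e2 : gbr t α ((t a b : Module.End k T), (0 : T)) (incl c)
        = ((0 : Module.End k T), α.symm (t a b c)) := by
      simp [gbr, incl, isoBr]
    rw [e1, e2, hF1]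
    simp [incl]
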